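/- Let τ ∈ C_b(ℝ) with τ ∘ α = τ for a homeomorphism α of ℝ, and w ∈ C_b(ℝ) with w > 0 and w^{-1} bounded. If for every ε ∈ (0,1) and every compact K ⊆ {x : |τ(x)| ≤ ε} there exists a strictly increasing sequence (n_k) in ℕ with lim_k sup_{t∈K} ∏_{j=0}^{n_k−1} |w(α^{j−n_k}(t))| = 0 and lim_k sup_{t∈K} ∏_{j=0}^{n_k−1} |w(α^j(t))|^{-1} = 0, then the operator T_{α,w}(f) := w·(f∘α) is hypercyclic on the Segal algebra 𝒜_τ. -/

import Mathlib

open Filter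

/-- `f` belongs to the Segal algebra `𝒜_τ`. -/
def MemSegal (τ f : ℝ → ℝ) : Prop :=
  Continuous f ∧ Tendsto f (cocompact ℝ) (nhds 0) ∧
    Summable (fun k : ℕ => ⨆ x : ℝ, |f x * τ x ^ k|)

/-- The Segal norm `‖f‖_τ`. -/
noncomputable def segalNorm (τ f : ℝ → ℝ) : ℝ :=
  ∑' k : ℕ, ⨆ x : ℝ, |f x * τ x ^ k|

open Set Topology TopologicalSpace

/-!
By Birkhoff's transitivity theorem it suffices that `𝒜_τ` is a separable Banach space on which
`T = T_{α,w}` is continuous and topologically transitive. Continuous functions with compact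
support inside a sublevel set `{|τ| ≤ ε}`, `ε < 1`, are dense: cutting `f` off where `|τ|` is
close to `1` costs little because `|f x| ≤ ‖f‖_τ (1 - |τ x|)`. For two such functions `f`, `g`
and the right inverse `S h = (h ∘ α⁻¹) / (w ∘ α⁻¹)` of `T`, the vector `f + Sⁿ g` is close to `f`
and `Tⁿ (f + Sⁿ g) = Tⁿ f + g` is close to `g`: as `τ ∘ α = τ`, the norms `‖Tⁿ f‖_τ` and
`‖Sⁿ g‖_τ` are bounded by the products of the hypothesis over a set containing both supports.
-/

theorem exists_dense_orbit_of_transitive {X : Type*} [TopologicalSpace X] [BaireSpace X]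
    [SecondCountableTopology X] [Nonempty X] {T : X → X} (hT : Continuous T)
    (htrans : ∀ U V : Set X, IsOpen U → U.Nonempty → IsOpen V → V.Nonempty →
      ∃ n, (U ∩ T^[n] ⁻¹' V).Nonempty) :
    ∃ x, Dense (range fun n => T^[n] x) := by
  set B := countableBasis X
  have hopen : ∀ V ∈ B, IsOpen (⋃ n, T^[n] ⁻¹' V) := fun V hV =>
    isOpen_iUnion fun n => (isOpen_of_mem_countableBasis hV).preimage (hT.iterate n)
  have hdense : ∀ V ∈ B, Dense (⋃ n, T^[n] ⁻¹' V) := by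
    intro V hV
    refine dense_iff_inter_open.2 fun U hU hUne => ?_
    obtain ⟨n, x, hxU, hxV⟩ := htrans U V hU hUne (isOpen_of_mem_countableBasis hV)
      (nonempty_of_mem_countableBasis hV)
    exact ⟨x, hxU, mem_iUnion.2 ⟨n, hxV⟩⟩
  obtain ⟨x, hx⟩ := (dense_biInter_of_isOpen hopen (countable_countableBasis X) hdense).nonempty
  refine ⟨x, (isBasis_countableBasis X).dense_iff.2 fun V hV _ => ?_⟩
  obtain ⟨n, hn⟩ := mem_iUnion.1 (mem_iInter₂.1 hx V hV)
  exact ⟨_, hn, n, rfl⟩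

lemma Real.le_biSup_of_forall_le {P : ℝ → ℝ} {K : Set ℝ} {C : ℝ} (hC : ∀ t ∈ K, P t ≤ C) {t : ℝ}
    (ht : t ∈ K) : P t ≤ ⨆ s ∈ K, P s := by
  have hbdd : BddAbove (range fun s => ⨆ _ : s ∈ K, P s) :=
    ⟨max C 0, forall_mem_range.2 fun s =>
      Real.iSup_le (fun hs => (hC s hs).trans (le_max_left _ _)) (le_max_right _ _)⟩
  calc P t = ⨆ _ : t ∈ K, P t := (ciSup_pos (f := fun _ => P t) ht).symm
    _ ≤ _ := le_ciSup hbdd t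

lemma Real.biSup_nonneg {P : ℝ → ℝ} {K : Set ℝ} (hP : ∀ t, 0 ≤ P t) : 0 ≤ ⨆ t ∈ K, P t :=
  Real.iSup_nonneg fun t => Real.iSup_nonneg fun _ => hP t

lemma prod_range_le_pow {n : ℕ} {f : ℕ → ℝ} {C : ℝ} (hf0 : ∀ j, 0 ≤ f j) (hf : ∀ j, f j ≤ C) :
    ∏ j ∈ Finset.range n, f j ≤ C ^ n := by
  simpa using Finset.prod_le_prod (fun j _ => hf0 j) (fun j _ => hf j) (s := Finset.range n)

noncomputable def weightedSup (τ h : ℝ → ℝ) (k : ℕ) : ℝ := ⨆ x, |h x * τ x ^ k|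

/-- In `ℝ` an unbounded `⨆` is `0`, so the finiteness of each `weightedSup τ h k` is recorded
separately. -/
structure SegalSummable (τ h : ℝ → ℝ) : Prop where
  bddAbove : ∀ k, BddAbove (range fun x => |h x * τ x ^ k|)
  summable : Summable (weightedSup τ h)

section Seminorms

variable {τ : ℝ → ℝ}

lemma segalNorm_eq_tsum (h : ℝ → ℝ) : segalNorm τ h = ∑' k, weightedSup τ h k := rfl

lemma segalNorm_neg (h : ℝ → ℝ) : segalNorm τ (-h) = segalNorm τ h := by
  simp [segalNorm]

lemma weightedSup_nonneg (h : ℝ → ℝ) (k : ℕ) : 0 ≤ weightedSup τ h k :=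
  Real.iSup_nonneg fun _ => abs_nonneg _

lemma weightedSup_le {h : ℝ → ℝ} {k : ℕ} {c : ℝ} (hc : 0 ≤ c)
    (hle : ∀ x, |h x * τ x ^ k| ≤ c) : weightedSup τ h k ≤ c :=
  Real.iSup_le hle hc

namespace SegalSummable

variable {g h : ℝ → ℝ}

lemma le_weightedSup (hh : SegalSummable τ h) (k : ℕ) (x : ℝ) :
    |h x * τ x ^ k| ≤ weightedSup τ h k :=
  le_ciSup (hh.bddAbove k) x

lemma weightedSup_le_segalNorm (hh : SegalSummable τ h) (k : ℕ) :
    weightedSup τ h k ≤ segalNorm τ h :=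
  hh.summable.le_tsum k fun j _ => weightedSup_nonneg h j

lemma abs_le_segalNorm (hh : SegalSummable τ h) (x : ℝ) : |h x| ≤ segalNorm τ h := by
  simpa using (hh.le_weightedSup 0 x).trans (hh.weightedSup_le_segalNorm 0)

lemma of_abs_le {b : ℕ → ℝ} (hb : Summable b) (hle : ∀ k x, |h x * τ x ^ k| ≤ b k) :
    SegalSummable τ h ∧ segalNorm τ h ≤ ∑' k, b k := by
  have hw : ∀ k, weightedSup τ h k ≤ b k := fun k =>
    weightedSup_le ((abs_nonneg _).trans (hle k 0)) (hle k)
  have hs : Summable (weightedSup τ h) := hb.of_nonneg_of_le (weightedSup_nonneg h) hw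
  exact ⟨⟨fun k => ⟨b k, forall_mem_range.2 (hle k)⟩, hs⟩, hs.tsum_le_tsum hw hb⟩

lemma of_abs_le_mul {c : ℝ} (hg : SegalSummable τ g)
    (hle : ∀ k x, |h x * τ x ^ k| ≤ c * weightedSup τ g k) :
    SegalSummable τ h ∧ segalNorm τ h ≤ c * segalNorm τ g := by
  simpa only [tsum_mul_left, ← segalNorm_eq_tsum] using of_abs_le (hg.summable.mul_left c) hle

lemma add (hh : SegalSummable τ h) (hg : SegalSummable τ g) :
    SegalSummable τ (h + g) ∧ segalNorm τ (h + g) ≤ segalNorm τ h + segalNorm τ g := by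
  rw [segalNorm_eq_tsum h, segalNorm_eq_tsum g, ← hh.summable.tsum_add hg.summable]
  refine of_abs_le (hh.summable.add hg.summable) fun k x => ?_
  calc |(h + g) x * τ x ^ k| = |h x * τ x ^ k + g x * τ x ^ k| := by simp [add_mul]
    _ ≤ |h x * τ x ^ k| + |g x * τ x ^ k| := abs_add_le _ _
    _ ≤ _ := add_le_add (hh.le_weightedSup k x) (hg.le_weightedSup k x)

lemma neg (hh : SegalSummable τ h) : SegalSummable τ (-h) :=
  (hh.of_abs_le_mul (c := 1) fun k x => by simpa using hh.le_weightedSup k x).1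

lemma tsum {v : ℕ → ℝ → ℝ} (hv : ∀ i, SegalSummable τ (v i))
    (hs : Summable fun i => segalNorm τ (v i)) :
    SegalSummable τ (fun x => ∑' i, v i x) ∧
      segalNorm τ (fun x => ∑' i, v i x) ≤ ∑' i, segalNorm τ (v i) := by
  set a : ℕ × ℕ → ℝ := fun p => weightedSup τ (v p.1) p.2
  have ha : Summable a :=
    (summable_prod_of_nonneg fun p => weightedSup_nonneg _ _).2 ⟨fun i => (hv i).summable, hs⟩
  have hcol : ∀ k, Summable fun i => weightedSup τ (v i) k := fun k =>
    hs.of_nonneg_of_le (fun i => weightedSup_nonneg _ _) fun i => (hv i).weightedSup_le_segalNorm k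
  have hrow : Summable fun k => ∑' i, weightedSup τ (v i) k :=
    ((summable_prod_of_nonneg fun p => weightedSup_nonneg _ _).1 ha.prod_symm).2
  have hswap : ∑' k, ∑' i, weightedSup τ (v i) k = ∑' i, segalNorm τ (v i) :=
    Summable.tsum_comm ha
  rw [← hswap]
  refine of_abs_le hrow fun k x => ?_
  have hx : Summable fun i => ‖v i x * τ x ^ k‖ :=
    (hcol k).of_nonneg_of_le (fun _ => norm_nonneg _) fun i => (hv i).le_weightedSup k x
  calc |(∑' i, v i x) * τ x ^ k| = ‖∑' i, v i x * τ x ^ k‖ := by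
        rw [tsum_mul_right, Real.norm_eq_abs]
    _ ≤ ∑' i, ‖v i x * τ x ^ k‖ := norm_tsum_le_tsum_norm hx
    _ ≤ ∑' i, weightedSup τ (v i) k := hx.tsum_le_tsum (fun i => (hv i).le_weightedSup k x) (hcol k)

lemma abs_tau_lt_one (hg : SegalSummable τ g) {x : ℝ} (hx : g x ≠ 0) : |τ x| < 1 := by
  by_contra! h1
  obtain ⟨k, hk⟩ := (hg.summable.tendsto_atTop_zero.eventually_lt_const (abs_pos.2 hx)).exists
  have : |g x| ≤ |g x * τ x ^ k| := by
    rw [abs_mul, abs_pow]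
    exact le_mul_of_one_le_right (abs_nonneg _) (one_le_pow₀ h1)
  exact (this.trans (hg.le_weightedSup k x)).not_gt hk

/-- Summing the geometric series `∑ₖ |g x| |τ x|ᵏ ≤ ‖g‖_τ`. -/
lemma abs_le_segalNorm_mul (hg : SegalSummable τ g) {x : ℝ} (hx : |τ x| < 1) :
    |g x| ≤ segalNorm τ g * (1 - |τ x|) := by
  have hgeom : HasSum (fun k : ℕ => |g x| * |τ x| ^ k) (|g x| * (1 - |τ x|)⁻¹) :=
    (hasSum_geometric_of_lt_one (abs_nonneg _) hx).mul_left _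
  have hle : |g x| * (1 - |τ x|)⁻¹ ≤ segalNorm τ g :=
    hasSum_le (fun k => by simpa [abs_mul] using hg.le_weightedSup k x) hgeom hg.summable.hasSum
  rwa [← div_eq_mul_inv, div_le_iff₀ (by linarith)] at hle

lemma abs_mul_pow_le {d : ℝ → ℝ} (hg : SegalSummable τ g) (hdg : ∀ x, |d x| ≤ |g x|) (k : ℕ)
    (x : ℝ) : |d x * τ x ^ k| ≤ |d x| := by
  rcases eq_or_ne (g x) 0 with h0 | h0
  · have : d x = 0 := abs_nonpos_iff.1 (by simpa [h0] using hdg x)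
    simp [this]
  · rw [abs_mul, abs_pow]
    exact mul_le_of_le_one_right (abs_nonneg _)
      (pow_le_one₀ (abs_nonneg _) (hg.abs_tau_lt_one h0).le)

/-- Dominated convergence for the series defining `segalNorm`. -/
lemma tendsto_segalNorm_of_tendstoUniformly (hg : SegalSummable τ g) {d : ℕ → ℝ → ℝ}
    (hdg : ∀ n x, |d n x| ≤ |g x|) (hd : TendstoUniformly d 0 atTop) :
    Tendsto (fun n => segalNorm τ (d n)) atTop (𝓝 0) := by
  have hbound : ∀ n k, ‖weightedSup τ (d n) k‖ ≤ weightedSup τ g k := fun n k => by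
    rw [Real.norm_of_nonneg (weightedSup_nonneg _ _)]
    refine weightedSup_le (weightedSup_nonneg _ _) fun x => (hg.le_weightedSup k x).trans' ?_
    rw [abs_mul, abs_mul]
    exact mul_le_mul_of_nonneg_right (hdg n x) (abs_nonneg _)
  have hterm : ∀ k, Tendsto (fun n => weightedSup τ (d n) k) atTop (𝓝 0) := by
    intro k
    refine Metric.tendsto_nhds.2 fun δ hδ => ?_
    filter_upwards [Metric.tendstoUniformly_iff.1 hd (δ / 2) (half_pos hδ)] with n hn
    rw [Real.dist_0_eq_abs, abs_of_nonneg (weightedSup_nonneg _ _)]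
    refine (weightedSup_le (half_pos hδ).le fun x => ?_).trans_lt (half_lt_self hδ)
    refine (abs_mul_pow_le hg (hdg n) k x).trans ?_
    simpa [dist_comm, Real.dist_eq] using (hn x).le
  have hpt : Summable fun k n => weightedSup τ (d n) k :=
    Pi.summable.2 fun n => hg.summable.of_norm_bounded fun k => hbound n k
  simpa only [segalNorm_eq_tsum, tsum_zero, ← tsum_apply hpt] using
    tendsto_tsum_of_dominated_convergence hg.summable hterm (Eventually.of_forall hbound)

lemma of_perm {P : ℝ → ℝ} {K : Set ℝ} {B : ℝ} (hh : SegalSummable τ h)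
    (π : Equiv.Perm ℝ) (hτ : ∀ t, τ (π t) = τ t) (hK : Function.support h ⊆ K) (hB0 : 0 ≤ B)
    (hB : ∀ t ∈ K, P t ≤ B) (hgh : ∀ t, |g (π t)| = P t * |h t|) :
    SegalSummable τ g ∧ segalNorm τ g ≤ B * segalNorm τ h := by
  refine hh.of_abs_le_mul fun k x => ?_
  obtain ⟨t, rfl⟩ := π.surjective x
  rw [abs_mul, hgh, hτ, mul_assoc, ← abs_mul]
  by_cases ht : t ∈ K
  · exact mul_le_mul (hB t ht) (hh.le_weightedSup k t) (abs_nonneg _) hB0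
  · rw [Function.notMem_support.1 fun h => ht (hK h)]
    simpa using mul_nonneg hB0 (weightedSup_nonneg h k)

end SegalSummable

lemma segalSummable_of_support_subset {h : ℝ → ℝ} {C ε : ℝ} (hC : ∀ x, |h x| ≤ C)
    (hε0 : 0 ≤ ε) (hε1 : ε < 1) (hsupp : Function.support h ⊆ {x | |τ x| ≤ ε}) :
    SegalSummable τ h ∧ segalNorm τ h ≤ C * (1 - ε)⁻¹ := by
  rw [← tsum_geometric_of_lt_one hε0 hε1, ← tsum_mul_left]
  refine SegalSummable.of_abs_le ((summable_geometric_of_lt_one hε0 hε1).mul_left C)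
    fun k x => ?_
  rcases eq_or_ne (h x) 0 with h0 | h0
  · simpa [h0] using mul_nonneg ((abs_nonneg _).trans (hC x)) (pow_nonneg hε0 k)
  · rw [abs_mul, abs_pow]
    exact mul_le_mul (hC x) (pow_le_pow_left₀ (abs_nonneg _) (hsupp h0) k) (by positivity)
      ((abs_nonneg _).trans (hC x))

end Seminorms

section Space

variable (τ : ℝ → ℝ)

def segalSubgroup : AddSubgroup (ℝ → ℝ) where
  carrier := {f | Continuous f ∧ Tendsto f (cocompact ℝ) (𝓝 0) ∧ SegalSummable τ f}
  zero_mem' := by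
    refine ⟨continuous_const, tendsto_const_nhds, ?_⟩
    exact (SegalSummable.of_abs_le summable_zero fun k x => by simp).1
  add_mem' := fun ⟨hfc, hf0, hf⟩ ⟨hgc, hg0, hg⟩ =>
    ⟨hfc.add hgc, by rw [← add_zero (0 : ℝ)]; exact hf0.add hg0, (hf.add hg).1⟩
  neg_mem' := fun ⟨hfc, hf0, hf⟩ => ⟨hfc.neg, by rw [← neg_zero]; exact hf0.neg, hf.neg⟩

/-- `𝒜_τ`, normed by `segalNorm τ`: a type synonym, so that it does not inherit the topology of
pointwise convergence from `ℝ → ℝ`. -/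
def SegalSpace : Type := segalSubgroup τ

namespace SegalSpace

instance : AddCommGroup (SegalSpace τ) := inferInstanceAs (AddCommGroup (segalSubgroup τ))

instance : CoeFun (SegalSpace τ) fun _ => ℝ → ℝ := ⟨fun f : segalSubgroup τ => (f : ℝ → ℝ)⟩

variable {τ}

def coeHom : SegalSpace τ →+ (ℝ → ℝ) := (segalSubgroup τ).subtype

lemma coe_injective : Function.Injective fun f : SegalSpace τ => ⇑f := Subtype.val_injective

def mk (f : ℝ → ℝ) (hf : f ∈ segalSubgroup τ) : SegalSpace τ := ⟨f, hf⟩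

@[simp] lemma coe_mk (f : ℝ → ℝ) (hf : f ∈ segalSubgroup τ) : ⇑(mk f hf) = f := rfl

lemma mem (f : SegalSpace τ) : ⇑f ∈ segalSubgroup τ := Subtype.prop _

lemma continuous (f : SegalSpace τ) : Continuous f := (mem f).1

lemma tendsto_cocompact (f : SegalSpace τ) : Tendsto f (cocompact ℝ) (𝓝 0) := (mem f).2.1

lemma segalSummable (f : SegalSpace τ) : SegalSummable τ f := (mem f).2.2

@[simp] lemma coe_zero : ⇑(0 : SegalSpace τ) = 0 := rfl
@[simp] lemma coe_add (f g : SegalSpace τ) : ⇑(f + g) = f + g := rfl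
@[simp] lemma coe_sub (f g : SegalSpace τ) : ⇑(f - g) = f - g := rfl

noncomputable instance : NormedAddCommGroup (SegalSpace τ) := AddGroupNorm.toNormedAddCommGroup
  { toFun := fun f => segalNorm τ f
    map_zero' := by simp [segalNorm]
    add_le' := fun f g => (f.segalSummable.add g.segalSummable).2
    neg' := fun f => segalNorm_neg f
    eq_zero_of_map_eq_zero' := fun f hf => coe_injective <| funext fun x =>
      abs_nonpos_iff.1 (hf ▸ f.segalSummable.abs_le_segalNorm x) }

lemma norm_def (f : SegalSpace τ) : ‖f‖ = segalNorm τ f := rfl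

lemma dist_def (f g : SegalSpace τ) : dist f g = segalNorm τ ⇑(f - g) := dist_eq_norm f g

lemma coe_sum {ι : Type*} (s : Finset ι) (f : ι → SegalSpace τ) :
    ⇑(∑ i ∈ s, f i) = ∑ i ∈ s, ⇑(f i) :=
  map_sum coeHom f s

lemma abs_apply_le_norm (f : SegalSpace τ) (x : ℝ) : |f x| ≤ ‖f‖ :=
  f.segalSummable.abs_le_segalNorm x

lemma tsum_mem {u : ℕ → SegalSpace τ} (hu : Summable (‖u ·‖)) :
    (fun x => ∑' i, u i x) ∈ segalSubgroup τ := by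
  have hbound : ∀ i x, ‖u i x‖ ≤ ‖u i‖ := fun i x => abs_apply_le_norm (u i) x
  refine ⟨continuous_tsum (fun i => (u i).continuous) hu hbound, ?_,
    (SegalSummable.tsum (fun i => (u i).segalSummable) hu).1⟩
  have hpt : Summable fun i => ⇑(u i) :=
    Pi.summable.2 fun x => hu.of_norm_bounded fun i => hbound i x
  have := tendsto_tsum_of_dominated_convergence hu (fun i => (u i).tendsto_cocompact)
    (Eventually.of_forall fun x i => hbound i x)
  simpa only [tsum_zero, ← tsum_apply hpt] using this

instance : CompleteSpace (SegalSpace τ) := by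
  refine NormedAddCommGroup.completeSpace_of_summable_imp_tendsto fun u hu => ?_
  refine ⟨mk _ (tsum_mem hu), tendsto_iff_norm_sub_tendsto_zero.2 ?_⟩
  refine squeeze_zero (fun _ => norm_nonneg _) (fun n => ?_) (tendsto_sum_nat_add (‖u ·‖))
  have htail : ⇑(∑ i ∈ Finset.range n, u i - mk _ (tsum_mem hu)) =
      -fun x => ∑' i, u (i + n) x := by
    ext x
    have hx : Summable fun i => u i x := hu.of_norm_bounded fun i => abs_apply_le_norm (u i) x
    simp [coe_sum, ← hx.sum_add_tsum_nat_add n]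
  rw [norm_def, htail, segalNorm_neg]
  exact (SegalSummable.tsum (fun i => (u (i + n)).segalSummable)
    ((summable_nat_add_iff n).2 hu)).2

lemma mem_of_memSegal {g : ℝ → ℝ} (hτb : ∃ C, ∀ x, |τ x| ≤ C) (hg : MemSegal τ g) :
    g ∈ segalSubgroup τ := by
  obtain ⟨Cτ, hCτ⟩ := hτb
  let g' : ZeroAtInftyContinuousMap ℝ ℝ := ⟨⟨g, hg.1⟩, hg.2.1⟩
  refine ⟨hg.1, hg.2.1, fun k => ⟨‖g'.toBCF‖ * Cτ ^ k, forall_mem_range.2 fun x => ?_⟩, hg.2.2⟩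
  rw [abs_mul, abs_pow]
  exact mul_le_mul (g'.toBCF.norm_coe_le_norm x) (pow_le_pow_left₀ (abs_nonneg _) (hCτ x) k)
    (by positivity) (norm_nonneg _)

end SegalSpace

end Space

def SupportedInSublevel (τ h : ℝ → ℝ) : Prop :=
  Continuous h ∧ ∃ ε, 0 < ε ∧ ε < 1 ∧
    ∃ K, IsCompact K ∧ K ⊆ {x | |τ x| ≤ ε} ∧ Function.support h ⊆ K

/-- These compact sets exhaust `{|τ| < 1}`. -/
def sublevelBox (τ : ℝ → ℝ) (n : ℕ) : Set ℝ :=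
  {x | |τ x| ≤ 1 - ((n : ℝ) + 2)⁻¹} ∩ Icc (-(n : ℝ)) n

section Sublevel

variable {τ : ℝ → ℝ}

lemma SupportedInSublevel.mem {h : ℝ → ℝ} (hh : SupportedInSublevel τ h) :
    h ∈ segalSubgroup τ := by
  obtain ⟨hc, ε, hε0, hε1, K, hK, hKτ, hsupp⟩ := hh
  have hcs : HasCompactSupport h := HasCompactSupport.intro hK fun x hx => by
    by_contra h0
    exact hx (hsupp h0)
  obtain ⟨C, hC⟩ := hc.bounded_above_of_compact_support hcs
  exact ⟨hc, hcs.is_zero_at_infty,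
    (segalSummable_of_support_subset hC hε0.le hε1 (hsupp.trans hKτ)).1⟩

lemma SupportedInSublevel.exists_common {f g : ℝ → ℝ} (hf : SupportedInSublevel τ f)
    (hg : SupportedInSublevel τ g) : ∃ ε, 0 < ε ∧ ε < 1 ∧ ∃ K, IsCompact K ∧
      K ⊆ {x | |τ x| ≤ ε} ∧ Function.support f ⊆ K ∧ Function.support g ⊆ K := by
  obtain ⟨-, ε, hε0, hε1, K, hK, hKτ, hfK⟩ := hf
  obtain ⟨-, ε', -, hε'1, K', hK', hK'τ, hgK'⟩ := hg
  refine ⟨max ε ε', lt_max_of_lt_left hε0, max_lt hε1 hε'1, K ∪ K', hK.union hK',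
    union_subset (hKτ.trans fun x (hx : |τ x| ≤ ε) => le_max_of_le_left hx)
      (hK'τ.trans fun x (hx : |τ x| ≤ ε') => le_max_of_le_right hx),
    hfK.trans subset_union_left, hgK'.trans subset_union_right⟩

lemma isCompact_sublevelBox (hτc : Continuous τ) (n : ℕ) : IsCompact (sublevelBox τ n) :=
  isCompact_Icc.inter_left (isClosed_le hτc.abs continuous_const)

lemma supportedInSublevel_of_support_subset (hτc : Continuous τ) {h : ℝ → ℝ} (hc : Continuous h)
    {n : ℕ} (hsupp : Function.support h ⊆ sublevelBox τ n) : SupportedInSublevel τ h := by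
  have h0 : (0 : ℝ) < ((n : ℝ) + 2)⁻¹ := by positivity
  have h2 : ((n : ℝ) + 2)⁻¹ ≤ 2⁻¹ := inv_anti₀ two_pos (by linarith [n.cast_nonneg (α := ℝ)])
  exact ⟨hc, _, by linarith, by linarith, _, isCompact_sublevelBox hτc n,
    inter_subset_left, hsupp⟩

lemma exists_cutoff (hτc : Continuous τ) (n : ℕ) :
    ∃ χ : C(ℝ, ℝ), (∀ x, χ x ∈ Icc 0 1) ∧ EqOn χ 1 (sublevelBox τ n) ∧
      Function.support χ ⊆ sublevelBox τ (n + 1) := by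
  set t := {x | 1 - ((n : ℝ) + 3)⁻¹ ≤ |τ x|} ∪ {x | (n : ℝ) + 1 ≤ |x|}
  have ht : IsClosed t :=
    (isClosed_le continuous_const hτc.abs).union (isClosed_le continuous_const continuous_abs)
  have hlt : ((n : ℝ) + 3)⁻¹ < ((n : ℝ) + 2)⁻¹ := by
    gcongr; linarith
  have hdisj : Disjoint (sublevelBox τ n) t := by
    refine Set.disjoint_left.2 fun x ⟨(hxτ : |τ x| ≤ _), hxI⟩ hxt => ?_
    rcases hxt with (hxt : _ ≤ |τ x|) | (hxt : _ ≤ |x|)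
    · linarith
    · linarith [abs_le.2 ⟨hxI.1, hxI.2⟩]
  obtain ⟨χ, hχ1, hχ0, -, hχ01⟩ :=
    exists_continuous_one_zero_of_isCompact (isCompact_sublevelBox hτc n) ht hdisj
  refine ⟨χ, hχ01, hχ1, fun x hx => ?_⟩
  have hxt : x ∉ t := fun hxt => hx (hχ0 hxt)
  obtain ⟨hxτ, hxI⟩ : |τ x| + ((n : ℝ) + 3)⁻¹ < 1 ∧ |x| < (n : ℝ) + 1 := by
    simpa [t, not_or] using hxt
  refine ⟨?_, neg_le_of_abs_le ?_, le_of_abs_le ?_⟩ <;> push_cast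
  · change |τ x| ≤ 1 - ((n : ℝ) + 1 + 2)⁻¹
    rw [add_assoc, show (1 : ℝ) + 2 = 3 by norm_num]
    linarith
  all_goals linarith

end Sublevel

namespace SegalSpace

variable {τ : ℝ → ℝ}

lemma tendsto_of_segalNorm_sub {F : ℕ → SegalSpace τ} {g : SegalSpace τ}
    (h : Tendsto (fun n => segalNorm τ (⇑g - ⇑(F n))) atTop (𝓝 0)) : Tendsto F atTop (𝓝 g) :=
  tendsto_iff_dist_tendsto_zero.2 (by simpa only [dist_comm _ g, dist_def, coe_sub] using h)

lemma eventually_abs_lt_of_notMem_sublevelBox (g : SegalSpace τ) {δ : ℝ} (hδ : 0 < δ) :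
    ∀ᶠ n in atTop, ∀ x ∉ sublevelBox τ n, |g x| < δ := by
  obtain ⟨R, hR⟩ := Metric.closedBall_compl_subset_of_mem_cocompact
    (g.tendsto_cocompact (Metric.ball_mem_nhds 0 hδ)) 0
  obtain ⟨N, hN⟩ := exists_nat_gt (max R (‖g‖ / δ))
  have hNg : ‖g‖ * ((N : ℝ) + 2)⁻¹ < δ := by
    rw [← div_eq_mul_inv, div_lt_iff₀ (by positivity)]
    have := (div_lt_iff₀ hδ).1 ((le_max_right _ _).trans_lt hN)
    nlinarith
  refine eventually_atTop.2 ⟨N, fun n hn x hbox => ?_⟩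
  have hnN : (N : ℝ) ≤ n := by exact_mod_cast hn
  rcases eq_or_ne (g x) 0 with h0 | h0
  · simpa [h0] using hδ
  simp only [sublevelBox, mem_inter_iff, mem_ofPred_eq, mem_Icc, not_and_or, not_le] at hbox
  rcases hbox with hτx | hx
  · calc |g x| ≤ ‖g‖ * (1 - |τ x|) :=
          g.segalSummable.abs_le_segalNorm_mul (g.segalSummable.abs_tau_lt_one h0)
      _ ≤ ‖g‖ * ((N : ℝ) + 2)⁻¹ := by
        gcongr
        calc 1 - |τ x| ≤ ((n : ℝ) + 2)⁻¹ := by linarith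
          _ ≤ ((N : ℝ) + 2)⁻¹ := by gcongr
      _ < δ := hNg
  · have hRx : x ∈ (Metric.closedBall 0 R)ᶜ := by
      simp only [mem_compl_iff, Metric.mem_closedBall, dist_zero_right, Real.norm_eq_abs, not_le]
      have hRN : R < N := (le_max_left _ _).trans_lt hN
      rcases hx with hx | hx
      · linarith [neg_le_abs x]
      · linarith [le_abs_self x]
    simpa [Real.dist_eq] using hR hRx

lemma tendstoUniformly_sub_cutoff_mul {χ : ℕ → ℝ → ℝ} (h01 : ∀ n x, χ n x ∈ Icc 0 1)
    (h1 : ∀ n, EqOn (χ n) 1 (sublevelBox τ n)) (g : SegalSpace τ) :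
    TendstoUniformly (fun n => ⇑g - χ n * ⇑g) 0 atTop := by
  refine Metric.tendstoUniformly_iff.2 fun δ hδ => ?_
  filter_upwards [eventually_abs_lt_of_notMem_sublevelBox g hδ] with n hn x
  have heq : dist ((0 : ℝ → ℝ) x) ((⇑g - χ n * ⇑g) x) = |1 - χ n x| * |g x| := by
    simp [Real.dist_eq, ← abs_mul, sub_mul, abs_sub_comm]
  rw [heq]
  by_cases hbox : x ∈ sublevelBox τ n
  · simpa [h1 n hbox] using hδ
  have hχ : |1 - χ n x| ≤ 1 := abs_le.2 ⟨by linarith [(h01 n x).2], by linarith [(h01 n x).1]⟩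
  exact (mul_le_of_le_one_left (abs_nonneg _) hχ).trans_lt (hn x hbox)

lemma tendsto_segalNorm_sub_cutoff_mul {χ : ℕ → ℝ → ℝ} (h01 : ∀ n x, χ n x ∈ Icc 0 1)
    (h1 : ∀ n, EqOn (χ n) 1 (sublevelBox τ n)) (g : SegalSpace τ) :
    Tendsto (fun n => segalNorm τ (⇑g - χ n * ⇑g)) atTop (𝓝 0) := by
  refine g.segalSummable.tendsto_segalNorm_of_tendstoUniformly (fun n x => ?_)
    (tendstoUniformly_sub_cutoff_mul h01 h1 g)
  have hχ : |1 - χ n x| ≤ 1 := abs_le.2 ⟨by linarith [(h01 n x).2], by linarith [(h01 n x).1]⟩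
  simpa [← one_sub_mul, abs_mul] using mul_le_of_le_one_left (abs_nonneg (g x)) hχ

lemma cutoff_mul_mem (hτc : Continuous τ) {χ : C(ℝ, ℝ)} {m : ℕ}
    (hχ : Function.support χ ⊆ sublevelBox τ m) {φ : ℝ → ℝ} (hφ : Continuous φ) :
    SupportedInSublevel τ (χ * φ) :=
  supportedInSublevel_of_support_subset hτc (χ.continuous.mul hφ)
    (Function.support_mul_subset_left _ _ |>.trans hχ)

noncomputable def cutoffExtend (hτc : Continuous τ) {m : ℕ} (χ : C(ℝ, ℝ))
    (hχ : Function.support χ ⊆ sublevelBox τ m) :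
    C(Icc (-(m : ℝ)) m, ℝ) →+ SegalSpace τ where
  toFun φ := mk _ (cutoff_mul_mem hτc hχ (ContinuousMap.IccExtend (by simp) φ).continuous).mem
  map_zero' := coe_injective (by ext; simp [Set.IccExtend])
  map_add' φ ψ := coe_injective (by ext; simp [Set.IccExtend, mul_add])

lemma continuous_cutoffExtend (hτc : Continuous τ) {m : ℕ} (χ : C(ℝ, ℝ))
    (hχ01 : ∀ x, χ x ∈ Icc 0 1) (hχ : Function.support χ ⊆ sublevelBox τ m) :
    Continuous (cutoffExtend hτc χ hχ) := by
  refine AddMonoidHomClass.continuous_of_bound _ ((m : ℝ) + 2) fun φ => ?_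
  set φ' := ContinuousMap.IccExtend (by simp : -(m : ℝ) ≤ m) φ
  have hbound : ∀ x, |(⇑χ * ⇑φ') x| ≤ ‖φ‖ := fun x => by
    rw [Pi.mul_apply, abs_mul]
    refine (mul_le_of_le_one_left (abs_nonneg _) ?_).trans (φ.norm_coe_le_norm _)
    exact abs_le.2 ⟨by linarith [(hχ01 x).1], (hχ01 x).2⟩
  have hsub : Function.support (⇑χ * ⇑φ') ⊆ {x | |τ x| ≤ 1 - ((m : ℝ) + 2)⁻¹} :=
    (Function.support_mul_subset_left _ _).trans (hχ.trans inter_subset_left)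
  have hm : ((m : ℝ) + 2)⁻¹ ≤ 1 := inv_le_one_of_one_le₀ (by linarith [m.cast_nonneg (α := ℝ)])
  have := (segalSummable_of_support_subset hbound (by linarith) (by simp; positivity) hsub).2
  rw [sub_sub_cancel, inv_inv] at this
  rw [mul_comm]
  exact this

lemma coe_cutoffExtend_restrict (hτc : Continuous τ) {m : ℕ} (χ : C(ℝ, ℝ))
    (hχ : Function.support χ ⊆ sublevelBox τ m) (g : SegalSpace τ) :
    ⇑(cutoffExtend hτc χ hχ (ContinuousMap.restrict (Icc (-(m : ℝ)) m) ⟨g, g.continuous⟩)) =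
      χ * g := by
  ext x
  by_cases hx : x ∈ Icc (-(m : ℝ)) m
  · simp [cutoffExtend, Set.IccExtend_of_mem _ _ hx]
  · have : χ x = 0 := Function.notMem_support.1 fun h => hx (hχ h).2
    simp [cutoffExtend, this]

lemma exists_cutoffs (hτc : Continuous τ) :
    ∃ (χ : ℕ → C(ℝ, ℝ)) (_ : ∀ n x, χ n x ∈ Icc 0 1)
      (hsupp : ∀ n, Function.support (χ n) ⊆ sublevelBox τ (n + 1)),
      ∀ g : SegalSpace τ, Tendsto (fun n => cutoffExtend hτc (χ n) (hsupp n)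
        (ContinuousMap.restrict _ ⟨g, g.continuous⟩)) atTop (𝓝 g) := by
  choose χ h01 h1 hsupp using exists_cutoff hτc
  refine ⟨χ, h01, hsupp, fun g => tendsto_of_segalNorm_sub ?_⟩
  simpa only [coe_cutoffExtend_restrict] using
    tendsto_segalNorm_sub_cutoff_mul (fun n => h01 n) h1 g

theorem dense_supportedInSublevel (hτc : Continuous τ) :
    Dense {f : SegalSpace τ | SupportedInSublevel τ f} := by
  obtain ⟨χ, -, hsupp, hlim⟩ := exists_cutoffs hτc
  refine fun g => mem_closure_of_tendsto (hlim g) (Eventually.of_forall fun n => ?_)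
  change SupportedInSublevel τ _
  rw [coe_cutoffExtend_restrict]
  exact cutoff_mul_mem hτc (hsupp n) g.continuous

theorem separableSpace (hτc : Continuous τ) : SeparableSpace (SegalSpace τ) := by
  obtain ⟨χ, h01, hsupp, hlim⟩ := exists_cutoffs hτc
  have hsep : IsSeparable (⋃ n, range (cutoffExtend hτc (χ n) (hsupp n))) := by
    refine isSeparable_iUnion.2 fun n => ?_
    rw [← image_univ]
    exact (IsSeparable.of_separableSpace univ).image
      (continuous_cutoffExtend hτc (χ n) (h01 n) (hsupp n))
  refine isSeparable_univ_iff.1 (hsep.closure.mono fun g _ => ?_)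
  exact mem_closure_of_tendsto (hlim g)
    (Eventually.of_forall fun n => mem_iUnion.2 ⟨n, mem_range_self _⟩)

end SegalSpace

section WeightedComposition

variable {X : Type*} (w : X → ℝ) (σ : Equiv.Perm X)

def weightedComp (F : X → ℝ) : X → ℝ := fun y => w y * F (σ y)

noncomputable def weightedCompInv (F : X → ℝ) : X → ℝ := fun y => (w (σ⁻¹ y))⁻¹ * F (σ⁻¹ y)

variable {w σ}

lemma weightedComp_iterate_apply (n : ℕ) (F : X → ℝ) (x : X) :
    (weightedComp w σ)^[n] F x = (∏ j ∈ Finset.range n, w ((σ ^ j) x)) * F ((σ ^ n) x) := by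
  induction n generalizing F with
  | zero => simp
  | succ n ih =>
    rw [Function.iterate_succ_apply, ih, Finset.prod_range_succ, pow_succ', Equiv.Perm.mul_apply,
      weightedComp, mul_assoc]

lemma weightedCompInv_iterate_apply_pow (n : ℕ) (F : X → ℝ) (t : X) :
    (weightedCompInv w σ)^[n] F ((σ ^ n) t) = (∏ j ∈ Finset.range n, w ((σ ^ j) t))⁻¹ * F t := by
  induction n generalizing t with
  | zero => simp
  | succ n ih =>
    rw [Function.iterate_succ_apply', pow_succ', Equiv.Perm.mul_apply, weightedCompInv,
      Equiv.Perm.coe_inv, Equiv.symm_apply_apply, ih, Finset.prod_range_succ, mul_inv]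
    ring

lemma weightedComp_iterate_weightedCompInv_iterate (hw : ∀ x, w x ≠ 0) (n : ℕ) (F : X → ℝ) :
    (weightedComp w σ)^[n] ((weightedCompInv w σ)^[n] F) = F := by
  refine Function.LeftInverse.iterate (fun F => funext fun y => ?_) n F
  have hy : σ⁻¹ (σ y) = y := σ.symm_apply_apply y
  change w y * ((w (σ⁻¹ (σ y)))⁻¹ * F (σ⁻¹ (σ y))) = F y
  rw [hy, mul_inv_cancel_left₀ (hw y)]

lemma Equiv.Perm.apply_zpow_eq_of_invariant {Y : Type*} {τ : X → Y} (hinv : ∀ x, τ (σ x) = τ x)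
    (m : ℤ) (x : X) : τ ((σ ^ m) x) = τ x := by
  induction m using Int.induction_on generalizing x with
  | zero => simp
  | succ i ih => rw [zpow_add_one, Equiv.Perm.mul_apply, ih, hinv]
  | pred i ih => rw [zpow_sub_one, Equiv.Perm.mul_apply, ih, ← hinv (σ⁻¹ x), Equiv.Perm.coe_inv,
    Equiv.apply_symm_apply]

end WeightedComposition

section IterateEstimates

variable {τ w : ℝ → ℝ} {σ : Equiv.Perm ℝ}

theorem segalNorm_weightedComp_iterate_le (hinv : ∀ x, τ (σ x) = τ x) {C : ℝ}
    (hC : ∀ x, |w x| ≤ C) {h : ℝ → ℝ} (hh : SegalSummable τ h) {K : Set ℝ}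
    (hK : Function.support h ⊆ K) (n : ℕ) :
    segalNorm τ ((weightedComp w σ)^[n] h) ≤
      (⨆ t ∈ K, ∏ j ∈ Finset.range n, |w ((σ ^ ((j : ℤ) - n)) t)|) * segalNorm τ h := by
  set P := fun t => ∏ j ∈ Finset.range n, |w ((σ ^ ((j : ℤ) - n)) t)|
  have hPC : ∀ t ∈ K, P t ≤ C ^ n := fun t _ =>
    prod_range_le_pow (fun _ => abs_nonneg _) fun _ => hC _
  refine (hh.of_perm (g := (weightedComp w σ)^[n] h) (P := P) (σ ^ (-(n : ℤ)))
    (Equiv.Perm.apply_zpow_eq_of_invariant hinv _) hK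
    (Real.biSup_nonneg fun _ => Finset.prod_nonneg fun _ _ => abs_nonneg _)
    (fun t ht => Real.le_biSup_of_forall_le hPC ht) fun t => ?_).2
  have hj : ∀ j : ℕ, (σ ^ j) ((σ ^ (-(n : ℤ))) t) = (σ ^ ((j : ℤ) - n)) t := fun j => by
    rw [sub_eq_add_neg, zpow_add, zpow_natCast, Equiv.Perm.mul_apply]
  have hn : (σ ^ n) ((σ ^ (-(n : ℤ))) t) = t := by
    rw [← zpow_natCast, ← Equiv.Perm.mul_apply, ← zpow_add, add_neg_cancel, zpow_zero,
      Equiv.Perm.one_apply]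
  rw [weightedComp_iterate_apply, abs_mul, Finset.abs_prod, hn]
  simp only [hj, P]

theorem segalNorm_weightedCompInv_iterate_le (hinv : ∀ x, τ (σ x) = τ x) {C : ℝ}
    (hC : ∀ x, |w x|⁻¹ ≤ C) {h : ℝ → ℝ} (hh : SegalSummable τ h) {K : Set ℝ}
    (hK : Function.support h ⊆ K) (n : ℕ) :
    SegalSummable τ ((weightedCompInv w σ)^[n] h) ∧
    segalNorm τ ((weightedCompInv w σ)^[n] h) ≤
      (⨆ t ∈ K, ∏ j ∈ Finset.range n, |w ((σ ^ (j : ℤ)) t)|⁻¹) * segalNorm τ h := by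
  set Q := fun t => ∏ j ∈ Finset.range n, |w ((σ ^ (j : ℤ)) t)|⁻¹
  have hQC : ∀ t ∈ K, Q t ≤ C ^ n := fun t _ =>
    prod_range_le_pow (fun _ => inv_nonneg.2 (abs_nonneg _)) fun _ => hC _
  refine hh.of_perm (P := Q) (σ ^ n) (by simpa using Equiv.Perm.apply_zpow_eq_of_invariant hinv n)
    hK (Real.biSup_nonneg fun _ =>
      Finset.prod_nonneg fun _ _ => inv_nonneg.2 (abs_nonneg _))
    (fun t ht => Real.le_biSup_of_forall_le hQC ht) fun t => ?_
  rw [weightedCompInv_iterate_apply_pow, abs_mul, abs_inv, Finset.abs_prod,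
    ← Finset.prod_inv_distrib]
  simp only [zpow_natCast, Q]

end IterateEstimates

def WeightProductsDecay (τ w : ℝ → ℝ) (α : ℝ ≃ₜ ℝ) : Prop :=
  ∀ ε : ℝ, 0 < ε → ε < 1 → ∀ K : Set ℝ, IsCompact K → K ⊆ {x : ℝ | |τ x| ≤ ε} →
    ∃ n : ℕ → ℕ, StrictMono n ∧
      Tendsto (fun k : ℕ => ⨆ t ∈ K, ∏ j ∈ Finset.range (n k),
          |w ((α.toEquiv ^ ((j : ℤ) - (n k : ℤ))) t)|) atTop (𝓝 0) ∧
      Tendsto (fun k : ℕ => ⨆ t ∈ K, ∏ j ∈ Finset.range (n k), |w ((α.toEquiv ^ (j : ℤ)) t)|⁻¹)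
        atTop (𝓝 0)

section Operator

variable {τ w : ℝ → ℝ} {α : ℝ ≃ₜ ℝ}

lemma SupportedInSublevel.weightedCompInv (hinv : ∀ x, τ (α x) = τ x) (hwc : Continuous w)
    (hwpos : ∀ x, 0 < w x) {h : ℝ → ℝ} (hh : SupportedInSublevel τ h) :
    SupportedInSublevel τ (weightedCompInv w α.toEquiv h) := by
  obtain ⟨hc, ε, hε0, hε1, K, hK, hKτ, hsupp⟩ := hh
  refine ⟨((hwc.comp α.continuous_symm).inv₀ fun x => (hwpos _).ne').mul
    (hc.comp α.continuous_symm), ε, hε0, hε1, α.symm ⁻¹' K, α.symm.isCompact_preimage.2 hK,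
    fun x hx => ?_, fun x hx => hsupp (right_ne_zero_of_mul hx)⟩
  have := hKτ hx
  change |τ (α.symm x)| ≤ ε at this
  rwa [← hinv, α.apply_symm_apply] at this

lemma SupportedInSublevel.weightedCompInv_iterate (hinv : ∀ x, τ (α x) = τ x)
    (hwc : Continuous w) (hwpos : ∀ x, 0 < w x) {h : ℝ → ℝ} (hh : SupportedInSublevel τ h)
    (n : ℕ) : SupportedInSublevel τ ((_root_.weightedCompInv w α.toEquiv)^[n] h) := by
  induction n with
  | zero => exact hh
  | succ n ih =>
    rw [Function.iterate_succ_apply']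
    exact ih.weightedCompInv hinv hwc hwpos

lemma weightedComp_mem (hinv : ∀ x, τ (α x) = τ x) (hwc : Continuous w) {C : ℝ}
    (hC : ∀ x, |w x| ≤ C) (f : SegalSpace τ) :
    weightedComp w α.toEquiv f ∈ segalSubgroup τ ∧
      segalNorm τ (weightedComp w α.toEquiv f) ≤ C * ‖f‖ := by
  have hsum := f.segalSummable.of_perm (g := weightedComp w α.toEquiv f)
    (P := fun t => |w (α.symm t)|) (K := univ) α.symm.toEquiv
    (fun t => by rw [← hinv]; exact congrArg τ (α.apply_symm_apply t)) (subset_univ _)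
    ((abs_nonneg _).trans (hC 0)) (fun t _ => hC _)
    (fun t => by simp [weightedComp, abs_mul])
  refine ⟨⟨hwc.mul (f.continuous.comp α.continuous), ?_, hsum.1⟩, hsum.2⟩
  exact isBoundedUnder_le_mul_tendsto_zero (isBoundedUnder_of ⟨C, hC⟩)
    (f.tendsto_cocompact.comp α.isClosedEmbedding.tendsto_cocompact)

/-- The weighted composition operator `T_{α,w} f = w · (f ∘ α)` on `𝒜_τ`. -/
noncomputable def weightedCompHom (hinv : ∀ x, τ (α x) = τ x) (hwc : Continuous w) {C : ℝ}
    (hC : ∀ x, |w x| ≤ C) : SegalSpace τ →+ SegalSpace τ where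
  toFun f := SegalSpace.mk _ (weightedComp_mem hinv hwc hC f).1
  map_zero' := SegalSpace.coe_injective (funext fun x => by simp [weightedComp])
  map_add' f g := SegalSpace.coe_injective (funext fun x => by simp [weightedComp, mul_add])

variable (hinv : ∀ x, τ (α x) = τ x) (hwc : Continuous w) {C : ℝ} (hC : ∀ x, |w x| ≤ C)

lemma continuous_weightedCompHom : Continuous (weightedCompHom hinv hwc hC) :=
  AddMonoidHomClass.continuous_of_bound _ C fun f => (weightedComp_mem hinv hwc hC f).2

lemma coe_weightedCompHom_iterate (n : ℕ) (f : SegalSpace τ) :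
    ⇑((weightedCompHom hinv hwc hC)^[n] f) = (weightedComp w α.toEquiv)^[n] f :=
  Function.Semiconj.iterate_right (f := fun f : SegalSpace τ => ⇑f) (fun _ => rfl) n f

theorem exists_iterate_weightedCompHom_inter (hτc : Continuous τ) (hwpos : ∀ x, 0 < w x)
    {C' : ℝ} (hC' : ∀ x, |w x|⁻¹ ≤ C') (hdecay : WeightProductsDecay τ w α)
    (U V : Set (SegalSpace τ)) (hU : IsOpen U) (hUne : U.Nonempty) (hV : IsOpen V)
    (hVne : V.Nonempty) : ∃ n, (U ∩ (weightedCompHom hinv hwc hC)^[n] ⁻¹' V).Nonempty := by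
  obtain ⟨f, hfU, hf⟩ := (SegalSpace.dense_supportedInSublevel hτc).inter_open_nonempty U hU hUne
  obtain ⟨g, hgV, hg⟩ := (SegalSpace.dense_supportedInSublevel hτc).inter_open_nonempty V hV hVne
  obtain ⟨r, hr, hfr⟩ := Metric.isOpen_iff.1 hU f hfU
  obtain ⟨r', hr', hgr⟩ := Metric.isOpen_iff.1 hV g hgV
  obtain ⟨ε, hε0, hε1, K, hK, hKτ, hfK, hgK⟩ := hf.exists_common hg
  obtain ⟨N, -, hP, hQ⟩ := hdecay ε hε0 hε1 K hK hKτ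
  obtain ⟨k, hkP, hkQ⟩ := (((hP.mul_const ‖f‖).eventually (gt_mem_nhds (by simpa using hr'))).and
    ((hQ.mul_const ‖g‖).eventually (gt_mem_nhds (by simpa using hr)))).exists
  set n := N k
  have hS := segalNorm_weightedCompInv_iterate_le hinv hC' g.segalSummable hgK n
  set s := SegalSpace.mk _ (hg.weightedCompInv_iterate hinv hwc hwpos n).mem
  have hTs : (weightedCompHom hinv hwc hC)^[n] s = g := SegalSpace.coe_injective <| by
    simp only [coe_weightedCompHom_iterate, s, SegalSpace.coe_mk]
    exact weightedComp_iterate_weightedCompInv_iterate (fun x => (hwpos x).ne') n g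
  refine ⟨n, f + s, hfr ?_, hgr ?_⟩
  · rw [Metric.mem_ball, dist_eq_norm, add_sub_cancel_left]
    exact hS.2.trans_lt hkQ
  · rw [iterate_map_add, hTs, Metric.mem_ball, dist_eq_norm, add_sub_cancel_right,
      SegalSpace.norm_def, coe_weightedCompHom_iterate]
    exact (segalNorm_weightedComp_iterate_le hinv hC f.segalSummable hfK n).trans_lt hkP

end Operator

/-- Under the weight-product decay condition on compact subsets of
`{|τ| ≤ ε}` (for every `ε ∈ (0,1)`), the operator `T_{α,w}(f) = w·(f∘α)` is
hypercyclic on `𝒜_τ`: some `f ∈ 𝒜_τ` has `‖·‖_τ`-dense orbit in `𝒜_τ`. -/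
theorem weighted_composition_hypercyclic_on_segal (α : ℝ ≃ₜ ℝ) (τ w : ℝ → ℝ)
    (hτc : Continuous τ) (hτb : ∃ C, ∀ x, |τ x| ≤ C)
    (hinv : ∀ x, τ (α x) = τ x)
    (hwc : Continuous w) (hwpos : ∀ x, 0 < w x)
    (hwb : ∃ C, ∀ x, |w x| ≤ C) (hwib : ∃ C, ∀ x, |w x|⁻¹ ≤ C)
    (hyp : ∀ ε : ℝ, 0 < ε → ε < 1 → ∀ K : Set ℝ, IsCompact K →
      K ⊆ {x : ℝ | |τ x| ≤ ε} →
      ∃ n : ℕ → ℕ, StrictMono n ∧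
        Tendsto (fun k : ℕ =>
            ⨆ t ∈ K, ∏ j ∈ Finset.range (n k),
              |w ((α.toEquiv ^ ((j : ℤ) - (n k : ℤ))) t)|)
          atTop (nhds 0) ∧
        Tendsto (fun k : ℕ =>
            ⨆ t ∈ K, ∏ j ∈ Finset.range (n k), |w ((α.toEquiv ^ (j : ℤ)) t)|⁻¹)
          atTop (nhds 0)) :
    ∃ f : ℝ → ℝ, MemSegal τ f ∧
      ∀ g : ℝ → ℝ, MemSegal τ g → ∀ ε : ℝ, 0 < ε →
        ∃ n : ℕ,
          segalNorm τ
            (fun x => (fun F : ℝ → ℝ => fun y => w y * F (α y))^[n] f x - g x) < ε := by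
  obtain ⟨C, hC⟩ := hwb
  obtain ⟨C', hC'⟩ := hwib
  have := SegalSpace.separableSpace hτc
  have := UniformSpace.secondCountable_of_separable (SegalSpace τ)
  obtain ⟨f, hf⟩ := exists_dense_orbit_of_transitive (continuous_weightedCompHom hinv hwc hC)
    (exists_iterate_weightedCompHom_inter hinv hwc hC hτc hwpos hC' hyp)
  refine ⟨f, ⟨f.continuous, f.tendsto_cocompact, f.segalSummable.summable⟩, fun g hg ε hε => ?_⟩
  obtain ⟨_, ⟨n, rfl⟩, hn⟩ :=
    hf.exists_dist_lt (SegalSpace.mk g (SegalSpace.mem_of_memSegal hτb hg)) hε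
  rw [dist_comm, SegalSpace.dist_def, SegalSpace.coe_sub,
    coe_weightedCompHom_iterate hinv hwc hC] at hn
  exact ⟨n, hn⟩
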